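/- Let M be a tripod (three segments glued at a common endpoint, with the inner path metric) and let l be the minimal length of its three segments. Then OR_M(2) = 2; moreover, for any total order T on M and every ε > 0 there exists a snake on three points in (M,T) of diameter at least l − ε and of width at most 2ε. -/

import Mathlib

/-!
Visiting at most three points in the order `T` takes at most two steps, each bounded by the
diameter, while every path through them is at least as long as the diameter; so `OR(2) ≤ 2` in
any metric space. Conversely, sort the ends of the three legs as `a < b < c` along `T`. The
geodesic from `a` to `c` through the centre stays at distance `≥ l` from `b`, starts below `b`
and ends above it, so near the supremum of the times at which it lies below `b` it jumps over
`b`: this gives snakes `x < b < z` with `d(x, z)` arbitrarily small and `d(x, b), d(b, z) ≥ l`,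
whose order ratio `(d(x, b) + d(b, z)) / l_opt` tends to `2`.
-/

open scoped Classical

/-- Length of the path visiting the points of a list in order,
for a distance function `d`. -/
noncomputable def pathLen {α : Type*} (d : α → α → ℝ) : List α → ℝ
  | [] => 0
  | [_] => 0
  | a :: b :: l => d a b + pathLen d (b :: l)

/-- `lopt d X` : minimal length of a path visiting all points of the finite set `X`. -/
noncomputable def lopt {α : Type*} (d : α → α → ℝ) (X : Finset α) : ℝ :=
  sInf {r : ℝ | ∃ l : List α, l.Nodup ∧ l.toFinset = X ∧ pathLen d l = r}

/-- `lord d T X` : length of the path visiting all points of `X` in the order `T`. -/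
noncomputable def lord {α : Type*} (d : α → α → ℝ) (T : LinearOrder α) (X : Finset α) : ℝ :=
  sInf {r : ℝ | ∃ l : List α, l.Nodup ∧ l.toFinset = X ∧ List.Pairwise T.lt l ∧ pathLen d l = r}

/-- The order ratio function `OR_{M,T}(k)`. -/
noncomputable def ORd {α : Type*} (d : α → α → ℝ) (T : LinearOrder α) (k : ℕ) : ℝ :=
  sSup {r : ℝ | ∃ X : Finset α, 2 ≤ X.card ∧ X.card ≤ k + 1 ∧ r = lord d T X / lopt d X}

/-- The order ratio function of the (unordered) space: infimum over all total orders. -/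
noncomputable def ORsp {α : Type*} (d : α → α → ℝ) (k : ℕ) : ℝ :=
  ⨅ T : LinearOrder α, ORd d T k

/-- A snake in an ordered space: a tuple of points strictly increasing with respect to `T`. -/
def IsSnake {α : Type*} (T : LinearOrder α) {n : ℕ} (x : Fin n → α) : Prop :=
  ∀ i j : Fin n, i < j → T.lt (x i) (x j)

/-- Diameter of a snake. -/
noncomputable def snakeDiam {α : Type*} (d : α → α → ℝ) {n : ℕ} (x : Fin n → α) : ℝ :=
  sSup {r : ℝ | ∃ i j : Fin n, r = d (x i) (x j)}

/-- Width of a snake: maximal distance between points whose indices have the same parity. -/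
noncomputable def snakeWidth {α : Type*} (d : α → α → ℝ) {n : ℕ} (x : Fin n → α) : ℝ :=
  sSup {r : ℝ | ∃ i j : Fin n, i.val % 2 = j.val % 2 ∧ r = d (x i) (x j)}


open Set

section PathLength

variable {M : Type*} [PseudoMetricSpace M]

lemma pathLen_nonneg : ∀ l : List M, 0 ≤ pathLen (fun x y : M => dist x y) l
  | [] => le_rfl
  | [_] => le_rfl
  | _ :: b :: l => add_nonneg dist_nonneg (pathLen_nonneg (b :: l))

lemma dist_le_pathLen : ∀ {l : List M} {a b : M}, a ∈ l → b ∈ l →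
    dist a b ≤ pathLen (fun x y : M => dist x y) l
  | [_], a, b, ha, hb => by simp_all [pathLen]
  | c :: e :: t, a, b, ha, hb => by
    have ih : ∀ {x y : M}, x ∈ e :: t → y ∈ e :: t →
        dist x y ≤ pathLen (fun x y : M => dist x y) (e :: t) := dist_le_pathLen
    have hc : ∀ {y : M}, y ∈ c :: e :: t →
        dist c y ≤ dist c e + pathLen (fun x y : M => dist x y) (e :: t) := by
      intro y hy
      rcases List.mem_cons.1 hy with rfl | hy
      · rw [dist_self]
        exact add_nonneg dist_nonneg (pathLen_nonneg _)
      · linarith [dist_triangle c e y, ih List.mem_cons_self hy]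
    simp only [pathLen]
    rcases List.mem_cons.1 ha with rfl | ha'
    · exact hc hb
    rcases List.mem_cons.1 hb with rfl | hb'
    · rw [dist_comm]
      exact hc ha
    · linarith [ih ha' hb', dist_nonneg (x := c) (y := e)]

lemma pathLen_le_mul_of_forall_dist_le {D : ℝ} :
    ∀ {l : List M}, (∀ a ∈ l, ∀ b ∈ l, dist a b ≤ D) →
      pathLen (fun x y : M => dist x y) l ≤ (l.length - 1 : ℕ) * D
  | [], _ => by simp [pathLen]
  | [_], _ => by simp [pathLen]
  | a :: b :: t, h => by
    have ih := pathLen_le_mul_of_forall_dist_le (l := b :: t) fun x hx y hy =>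
      h x (List.mem_cons_of_mem _ hx) y (List.mem_cons_of_mem _ hy)
    have hab := h a List.mem_cons_self b (List.mem_cons_of_mem _ List.mem_cons_self)
    simp only [pathLen, List.length_cons, Nat.add_sub_cancel] at ih ⊢
    push_cast
    linarith

lemma lopt_nonneg (X : Finset M) : 0 ≤ lopt (fun x y : M => dist x y) X :=
  Real.sInf_nonneg fun _ ⟨l, _, _, hl⟩ => hl ▸ pathLen_nonneg l

lemma lopt_le_pathLen [DecidableEq M] {l : List M} (hl : l.Nodup) :
    lopt (fun x y : M => dist x y) l.toFinset ≤ pathLen (fun x y : M => dist x y) l :=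
  csInf_le ⟨0, fun _ ⟨l', _, _, hl'⟩ => hl' ▸ pathLen_nonneg l'⟩ ⟨l, hl, by convert rfl, rfl⟩

lemma dist_le_lopt {X : Finset M} {a b : M} (ha : a ∈ X) (hb : b ∈ X) :
    dist a b ≤ lopt (fun x y : M => dist x y) X := by
  refine le_csInf ⟨_, X.toList, X.nodup_toList, X.toList_toFinset, rfl⟩ ?_
  rintro _ ⟨l, -, rfl, rfl⟩
  exact dist_le_pathLen (List.mem_toFinset.1 ha) (List.mem_toFinset.1 hb)

end PathLength

lemma lord_eq_pathLen {α : Type*} (d : α → α → ℝ) (T : LinearOrder α) {l : List α}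
    (hl : l.Pairwise T.lt) : lord d T l.toFinset = pathLen d l := by
  have hsorted : {r : ℝ | ∃ l' : List α, l'.Nodup ∧ l'.toFinset = l.toFinset ∧
      l'.Pairwise T.lt ∧ pathLen d l' = r} = {pathLen d l} := by
    ext r
    constructor
    · rintro ⟨l', hl'nd, hl'l, hl', rfl⟩
      have hperm := List.perm_of_nodup_nodup_toFinset_eq hl'nd hl.nodup hl'l
      rw [hperm.eq_of_pairwise (fun _ _ _ _ h h' => (lt_asymm h h').elim) hl' hl]
      rfl
    · rintro rfl
      exact ⟨l, hl.nodup, rfl, hl, rfl⟩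
  rw [lord, hsorted, csInf_singleton]

section OrderRatio

variable {M : Type*} [PseudoMetricSpace M]

lemma lord_le_two_mul_lopt (T : LinearOrder M) {X : Finset M} (hX : X.card ≤ 3) :
    lord (fun x y : M => dist x y) T X ≤ 2 * lopt (fun x y : M => dist x y) X := by
  have hlord := lord_eq_pathLen (fun x y : M => dist x y) T X.sortedLT_sort.pairwise
  rw [X.sort_toFinset] at hlord
  have hmem : ∀ a ∈ X.sort, a ∈ X := fun a => (Finset.mem_sort (· ≤ ·)).1
  have hlen : (((X.sort).length - 1 : ℕ) : ℝ) ≤ 2 := by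
    rw [Finset.length_sort]
    exact_mod_cast (show X.card - 1 ≤ 2 by omega)
  rw [hlord]
  exact (pathLen_le_mul_of_forall_dist_le fun a ha b hb =>
    dist_le_lopt (hmem a ha) (hmem b hb)).trans (mul_le_mul_of_nonneg_right hlen (lopt_nonneg X))

lemma lord_div_lopt_le_two (T : LinearOrder M) {X : Finset M} (hX : X.card ≤ 3) :
    lord (fun x y : M => dist x y) T X / lopt (fun x y : M => dist x y) X ≤ 2 :=
  div_le_of_le_mul₀ (lopt_nonneg X) zero_le_two (lord_le_two_mul_lopt T hX)

lemma ORd_le_two (T : LinearOrder M) : ORd (fun x y : M => dist x y) T 2 ≤ 2 :=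
  Real.sSup_le (fun _ ⟨_, _, hX, hr⟩ => hr ▸ lord_div_lopt_le_two T hX) zero_le_two

lemma two_mul_lopt_le_lord_add (T : LinearOrder M) {x y z : M} (hxy : T.lt x y)
    (hyz : T.lt y z) :
    2 * lopt (fun x y : M => dist x y) [x, y, z].toFinset
      ≤ lord (fun x y : M => dist x y) T [x, y, z].toFinset + 2 * dist x z := by
  have hsorted : [x, y, z].Pairwise T.lt := by simp [hxy, hyz, hxy.trans hyz]
  have hne : x ≠ y ∧ x ≠ z ∧ y ≠ z := ⟨hxy.ne, (hxy.trans hyz).ne, hyz.ne⟩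
  have hzxy : [z, x, y].toFinset = [x, y, z].toFinset := by ext; simp; tauto
  have hxzy : [x, z, y].toFinset = [x, y, z].toFinset := by ext; simp; tauto
  have h₁ := lopt_le_pathLen (l := [z, x, y]) (by simp; tauto)
  have h₂ := lopt_le_pathLen (l := [x, z, y]) (by simp; tauto)
  rw [hzxy] at h₁
  rw [hxzy] at h₂
  rw [lord_eq_pathLen _ T hsorted]
  simp only [pathLen] at h₁ h₂ ⊢
  linarith [dist_comm x z, dist_comm y z]

lemma two_le_ORd_of_forall_snake (T : LinearOrder M) {l : ℝ} (hl : 0 < l)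
    (h : ∀ ε > 0, ∃ x y z : M,
      T.lt x y ∧ T.lt y z ∧ dist x z ≤ ε ∧ l ≤ dist x y ∧ l ≤ dist y z) :
    2 ≤ ORd (fun x y : M => dist x y) T 2 := by
  refine le_of_forall_pos_le_add fun δ hδ => ?_
  obtain ⟨x, y, z, hxy, hyz, hxz, hlxy, -⟩ := h (δ * l / 2) (by positivity)
  set X := [x, y, z].toFinset
  have hcard : X.card = 3 := by
    refine List.toFinset_card_of_nodup (List.Pairwise.nodup (r := (· < ·)) ?_)
    simp [hxy, hyz, hxy.trans hyz]
  have hlopt : l ≤ lopt (fun x y : M => dist x y) X :=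
    hlxy.trans (dist_le_lopt (by simp [X]) (by simp [X]))
  have hratio :
      2 - δ ≤ lord (fun x y : M => dist x y) T X / lopt (fun x y : M => dist x y) X := by
    rw [le_div_iff₀ (hl.trans_le hlopt)]
    linarith [two_mul_lopt_le_lord_add T hxy hyz, mul_le_mul_of_nonneg_left hlopt hδ.le]
  have hle : lord (fun x y : M => dist x y) T X / lopt (fun x y : M => dist x y) X
      ≤ ORd (fun x y : M => dist x y) T 2 :=
    le_csSup ⟨2, fun _ ⟨_, _, hX, hr⟩ => hr ▸ lord_div_lopt_le_two T hX⟩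
      ⟨X, by omega, by omega, rfl⟩
  linarith

end OrderRatio

lemma exists_lt_lt_of_forall_ne {α : Type*} [LinearOrder α] {φ : ℝ → α} {a b : ℝ} {p : α}
    (hab : a ≤ b) (ha : φ a < p) (hb : p < φ b) (hp : ∀ t ∈ Icc a b, φ t ≠ p)
    {ε : ℝ} (hε : 0 < ε) :
    ∃ s ∈ Icc a b, ∃ t ∈ Icc a b, |s - t| ≤ ε ∧ φ s < p ∧ p < φ t := by
  set A := {s | s ∈ Icc a b ∧ φ s < p}
  have haA : a ∈ A := ⟨left_mem_Icc.2 hab, ha⟩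
  have hA : BddAbove A := ⟨b, fun s hs => hs.1.2⟩
  set c := sSup A
  have hcb : c ≤ b := csSup_le ⟨a, haA⟩ fun s hs => hs.1.2
  obtain ⟨s, hsA, hcs⟩ := exists_lt_of_lt_csSup ⟨a, haA⟩ (show c - ε / 2 < c by linarith)
  have hsc : s ≤ c := le_csSup hA hsA
  set t := min (c + ε / 2) b
  have hct : c ≤ t := le_min (by linarith) hcb
  have ht : t ∈ Icc a b := ⟨(le_csSup hA haA).trans hct, min_le_right _ _⟩
  refine ⟨s, hsA.1, t, ht, ?_, hsA.2, ?_⟩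
  · rw [abs_sub_comm, abs_of_nonneg (by linarith)]
    linarith [min_le_left (c + ε / 2) b]
  · rcases min_choice (c + ε / 2) b with htc | htb
    · have htA : t ∉ A := fun htA => by linarith [le_csSup hA htA]
      exact lt_of_le_of_ne (not_lt.1 fun h => htA ⟨ht, h⟩) (hp t ht).symm
    · rw [show t = b from htb]
      exact hb

lemma exists_snake_of_path {M : Type*} [PseudoMetricSpace M] (T : LinearOrder M) {σ : ℝ → M}
    {D l : ℝ} {p : M} (hD : 0 ≤ D) (hl : 0 < l)
    (hσ : ∀ s ∈ Icc 0 D, ∀ t ∈ Icc 0 D, dist (σ s) (σ t) ≤ |s - t|)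
    (hp : ∀ s ∈ Icc 0 D, l ≤ dist (σ s) p) (h₀ : T.lt (σ 0) p) (h₁ : T.lt p (σ D))
    {ε : ℝ} (hε : 0 < ε) :
    ∃ x y z : M, T.lt x y ∧ T.lt y z ∧ dist x z ≤ ε ∧ l ≤ dist x y ∧ l ≤ dist y z := by
  have hne : ∀ t ∈ Icc 0 D, σ t ≠ p := fun t ht h => by
    linarith [hp t ht, dist_self p, h ▸ hp t ht]
  obtain ⟨s, hs, t, ht, hst, hsp, hpt⟩ := exists_lt_lt_of_forall_ne hD h₀ h₁ hne hε
  exact ⟨σ s, p, σ t, hsp, hpt, (hσ s hs t ht).trans hst, hp s hs, dist_comm p (σ t) ▸ hp t ht⟩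

/-- `γ i` parametrises by arc length, starting from the centre, the `i`-th leg of a tripod
with legs of length `l` in `M`. -/
structure IsTripod {M : Type*} [PseudoMetricSpace M] (l : ℝ) (γ : Fin 3 → ℝ → M) : Prop where
  dist_eq : ∀ i, ∀ s ∈ Icc 0 l, ∀ t ∈ Icc 0 l, dist (γ i s) (γ i t) = |s - t|
  dist_eq_add : ∀ i j, i ≠ j → ∀ s ∈ Icc 0 l, ∀ t ∈ Icc 0 l, dist (γ i s) (γ j t) = s + t

noncomputable def tripodPath {M : Type*} (γ : Fin 3 → ℝ → M) (l : ℝ) (i k : Fin 3) (s : ℝ) : M :=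
  if s ≤ l then γ i (l - s) else γ k (s - l)

lemma tripodPath_zero {M : Type*} {γ : Fin 3 → ℝ → M} {l : ℝ} (hl : 0 ≤ l) (i k : Fin 3) :
    tripodPath γ l i k 0 = γ i l := by
  simp [tripodPath, hl]

lemma tripodPath_two_mul {M : Type*} {γ : Fin 3 → ℝ → M} {l : ℝ} (hl : 0 < l) (i k : Fin 3) :
    tripodPath γ l i k (2 * l) = γ k l := by
  rw [tripodPath, if_neg (by linarith), two_mul, add_sub_cancel_right]

namespace IsTripod

variable {M : Type*} [PseudoMetricSpace M] {l : ℝ} {γ : Fin 3 → ℝ → M}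

lemma dist_tripodPath (h : IsTripod l γ) {i k : Fin 3} (hik : i ≠ k) :
    ∀ s ∈ Icc 0 (2 * l), ∀ t ∈ Icc 0 (2 * l),
      dist (tripodPath γ l i k s) (tripodPath γ l i k t) = |s - t| := by
  rintro s ⟨hs₀, hs₁⟩ t ⟨ht₀, ht₁⟩
  unfold tripodPath
  split_ifs with hs ht ht
  · rw [h.dist_eq i _ ⟨by linarith, by linarith⟩ _ ⟨by linarith, by linarith⟩, abs_sub_comm]
    ring_nf
  · rw [h.dist_eq_add i k hik _ ⟨by linarith, by linarith⟩ _ ⟨by linarith, by linarith⟩,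
      abs_of_nonpos (by linarith)]
    ring
  · rw [h.dist_eq_add k i hik.symm _ ⟨by linarith, by linarith⟩ _ ⟨by linarith, by linarith⟩,
      abs_of_nonneg (by linarith)]
    ring
  · rw [h.dist_eq k _ ⟨by linarith, by linarith⟩ _ ⟨by linarith, by linarith⟩]
    ring_nf

lemma le_dist_tripodPath (h : IsTripod l γ) (hl : 0 ≤ l) {i j k : Fin 3} (hij : i ≠ j)
    (hkj : k ≠ j) : ∀ s ∈ Icc 0 (2 * l), l ≤ dist (tripodPath γ l i k s) (γ j l) := by
  rintro s ⟨hs₀, hs₁⟩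
  unfold tripodPath
  split_ifs with hs
  · rw [h.dist_eq_add i j hij _ ⟨by linarith, by linarith⟩ _ ⟨hl, le_rfl⟩]
    linarith
  · rw [h.dist_eq_add k j hkj _ ⟨by linarith, by linarith⟩ _ ⟨hl, le_rfl⟩]
    linarith

lemma injective_endpoint (h : IsTripod l γ) (hl : 0 < l) :
    Function.Injective fun i => γ i l := by
  intro i j hij
  by_contra hne
  have := h.dist_eq_add i j hne l ⟨hl.le, le_rfl⟩ l ⟨hl.le, le_rfl⟩
  simp only at hij
  rw [hij, dist_self] at this
  linarith

lemma exists_snake (h : IsTripod l γ) (hl : 0 < l) (T : LinearOrder M) {ε : ℝ} (hε : 0 < ε) :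
    ∃ x y z : M, T.lt x y ∧ T.lt y z ∧ dist x z ≤ ε ∧ l ≤ dist x y ∧ l ≤ dist y z := by
  set e := fun i => γ i l
  set π := Tuple.sort e
  have hmono : StrictMono (e ∘ π) :=
    (Tuple.monotone_sort e).strictMono_of_injective ((h.injective_endpoint hl).comp π.injective)
  have hne : ∀ {a b : Fin 3}, a ≠ b → π a ≠ π b := fun hab => π.injective.ne hab
  refine exists_snake_of_path T (by positivity : (0 : ℝ) ≤ 2 * l) hl
    (fun s hs t ht => (h.dist_tripodPath (hne (show (0 : Fin 3) ≠ 2 by decide)) s hs t ht).le)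
    (h.le_dist_tripodPath hl.le (hne (show (0 : Fin 3) ≠ 1 by decide))
      (hne (show (2 : Fin 3) ≠ 1 by decide))) ?_ ?_ hε
  · rw [tripodPath_zero hl.le]
    exact hmono (by decide : (0 : Fin 3) < 1)
  · rw [tripodPath_two_mul hl]
    exact hmono (by decide : (1 : Fin 3) < 2)

end IsTripod

section Snake

variable {α : Type*}

lemma isSnake_three (T : LinearOrder α) {x y z : α} (hxy : T.lt x y) (hyz : T.lt y z) :
    IsSnake T ![x, y, z] := by
  intro i j hij
  fin_cases i <;> fin_cases j <;> simp_all [hxy.trans hyz]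

lemma le_snakeDiam (d : α → α → ℝ) {n : ℕ} (x : Fin n → α) (i j : Fin n) :
    d (x i) (x j) ≤ snakeDiam d x := by
  refine le_csSup ((Set.finite_range fun p : Fin n × Fin n => d (x p.1) (x p.2)).subset ?_).bddAbove
    ⟨i, j, rfl⟩
  rintro _ ⟨i, j, rfl⟩
  exact ⟨(i, j), rfl⟩

lemma snakeWidth_three_le {M : Type*} [PseudoMetricSpace M] {x y z : M} {w : ℝ}
    (hw : dist x z ≤ w) : snakeWidth (fun x y : M => dist x y) ![x, y, z] ≤ w := by
  have hw₀ : 0 ≤ w := dist_nonneg.trans hw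
  refine Real.sSup_le ?_ hw₀
  rintro _ ⟨i, j, hij, rfl⟩
  fin_cases i <;> fin_cases j <;> simp [dist_comm z x] at hij ⊢ <;> assumption

end Snake

theorem stmt9_general {M : Type*} [MetricSpace M] (L : Fin 3 → ℝ) (hL : ∀ i, 0 < L i)
    (γ : Fin 3 → ℝ → M)
    (hsame : ∀ i : Fin 3, ∀ s t : ℝ, s ∈ Set.Icc 0 (L i) → t ∈ Set.Icc 0 (L i) →
      dist (γ i s) (γ i t) = |s - t|)
    (hdiff : ∀ i j : Fin 3, i ≠ j → ∀ s t : ℝ, s ∈ Set.Icc 0 (L i) → t ∈ Set.Icc 0 (L j) →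
      dist (γ i s) (γ j t) = s + t) :
    ORsp (fun x y : M => dist x y) 2 = 2 ∧
    ∀ (T : LinearOrder M) (ε : ℝ), 0 < ε →
      ∃ x : Fin 3 → M, IsSnake T x ∧
        min (min (L 0) (L 1)) (L 2) - ε ≤ snakeDiam (fun x y : M => dist x y) x ∧
        snakeWidth (fun x y : M => dist x y) x ≤ 2 * ε := by
  set l := min (min (L 0) (L 1)) (L 2)
  have hl : 0 < l := lt_min (lt_min (hL 0) (hL 1)) (hL 2)
  have hIcc : ∀ i, Icc 0 l ⊆ Icc 0 (L i) := fun i =>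
    Icc_subset_Icc_right (by fin_cases i <;> simp [l])
  have htri : IsTripod l γ :=
    ⟨fun i s hs t ht => hsame i s t (hIcc i hs) (hIcc i ht),
      fun i j hij s hs t ht => hdiff i j hij s t (hIcc i hs) (hIcc j ht)⟩
  refine ⟨?_, fun T ε hε => ?_⟩
  · have hOR : ∀ T, ORd (fun x y : M => dist x y) T 2 = 2 := fun T =>
      (ORd_le_two T).antisymm
        (two_le_ORd_of_forall_snake T hl fun ε hε => htri.exists_snake hl T hε)
    have : Nonempty (LinearOrder M) := ⟨IsWellOrder.linearOrder WellOrderingRel⟩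
    simp only [ORsp, hOR, ciInf_const]
  · obtain ⟨x, y, z, hxy, hyz, hxz, hlxy, -⟩ := htri.exists_snake hl T hε
    refine ⟨![x, y, z], isSnake_three T hxy hyz, ?_, snakeWidth_three_le (by linarith)⟩
    exact (by linarith : l - ε ≤ dist x y).trans (le_snakeDiam _ ![x, y, z] 0 1)

/-- Let `M` be a tripod: three segments of lengths `L 0, L 1, L 2` glued at a common
endpoint, with the inner path metric (axiomatised by the isometric parametrisations `γ`).
Let `l` be the minimal length of the segments.  Then `OR_M(2) = 2`; moreover for any order
`T` and any `ε > 0` there is a snake on three points of diameter at least `l - ε` and of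
width at most `2ε`. -/
theorem stmt9 {M : Type*} [MetricSpace M] (L : Fin 3 → ℝ) (hL : ∀ i, 0 < L i)
    (γ : Fin 3 → ℝ → M)
    (hsame : ∀ i : Fin 3, ∀ s t : ℝ, s ∈ Set.Icc 0 (L i) → t ∈ Set.Icc 0 (L i) →
      dist (γ i s) (γ i t) = |s - t|)
    (hdiff : ∀ i j : Fin 3, i ≠ j → ∀ s t : ℝ, s ∈ Set.Icc 0 (L i) → t ∈ Set.Icc 0 (L j) →
      dist (γ i s) (γ j t) = s + t)
    (hsurj : ∀ x : M, ∃ i : Fin 3, ∃ s ∈ Set.Icc 0 (L i), x = γ i s) :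
    ORsp (fun x y : M => dist x y) 2 = 2 ∧
    ∀ (T : LinearOrder M) (ε : ℝ), 0 < ε →
      ∃ x : Fin 3 → M, IsSnake T x ∧
        min (min (L 0) (L 1)) (L 2) - ε ≤ snakeDiam (fun x y : M => dist x y) x ∧
        snakeWidth (fun x y : M => dist x y) x ≤ 2 * ε :=
  stmt9_general L hL γ hsame hdiff
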